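/- arXiv:1212.3983 — 3 statements merged into one kernel-verified Lean document; each statement's English description precedes it below -/
import Mathlib

section
/- Let A and B be finite sets of chords of a circle such that every chord of A has exactly one endpoint on an arc (X,Y), every chord of B has both endpoints on (X,Y), every triangle in the intersection graph of A ∪ B contains at most one chord of B, and every chord of B crosses some chord of A. For each chord b of B, associate the interval [P_b, Q_b] on the real line, where P_b + 1 and Q_b are the minimal and maximal indices (in the arc order along (X,Y)) of chords of A crossing b. Then no two such intervals properly cross, i.e., there are no chords b, b' with P_b < P_{b'} < Q_b < Q_{b'}. -/
/-- A chord of the circle, given by its two endpoints in a fixed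
parametrization of the circle by real numbers. -/
structure Chord where
  l : ℝ
  r : ℝ
  lt : l < r

noncomputable instance : DecidableEq Chord := Classical.decEq _

/-- Two chords cross iff their endpoints interleave. -/
def Chord.Crosses (c d : Chord) : Prop :=
  (c.l < d.l ∧ d.l < c.r ∧ c.r < d.r) ∨ (d.l < c.l ∧ c.l < d.r ∧ d.r < c.r)

/-!
A chord of `A` crosses a chord `b` of `B` exactly when its endpoint on the arc lies between the
endpoints of `b`, so the indices of the chords of `A` crossing `b` form the run of indices whose
endpoints fall in the open interval spanned by `b`. If the runs of `b` and `b'` interleave, then the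
chord of `A` just before the run of `b'` still lies in the interval of `b` and the chord just after
the run of `b` still lies in the interval of `b'`, which forces `b` and `b'` to cross; the first chord
of the run of `b'` then crosses both of them, a triangle with two chords of `B`.
-/

open Set

namespace Chord

theorem crosses_iff_mem_Ioo {c d : Chord} {x y p : ℝ}
    (hc : (c.l = p ∧ c.r ∉ Ioo x y) ∨ (c.r = p ∧ c.l ∉ Ioo x y)) (hp : p ∈ Ioo x y)
    (hd : d.l ∈ Ioo x y ∧ d.r ∈ Ioo x y) :
    c.Crosses d ↔ p ∈ Ioo d.l d.r := by
  obtain ⟨hxp, hpy⟩ := hp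
  obtain ⟨⟨hxl, hly⟩, ⟨hxr, hry⟩⟩ := hd
  have hc_lt := c.lt
  have hd_lt := d.lt
  unfold Crosses
  rcases hc with ⟨rfl, hr⟩ | ⟨rfl, hl⟩
  · have : y ≤ c.r := not_lt.1 fun h ↦ hr ⟨by linarith, h⟩
    constructor
    · rintro (⟨-, -, h⟩ | ⟨h₁, h₂, -⟩)
      · linarith
      · exact ⟨h₁, h₂⟩
    · rintro ⟨h₁, h₂⟩
      exact Or.inr ⟨h₁, h₂, by linarith⟩
  · have : c.l ≤ x := not_lt.1 fun h ↦ hl ⟨h, by linarith⟩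
    constructor
    · rintro (⟨-, h₁, h₂⟩ | ⟨h, -, -⟩)
      · exact ⟨h₁, h₂⟩
      · linarith
    · rintro ⟨h₁, h₂⟩
      exact Or.inl ⟨by linarith, h₁, h₂⟩

end Chord

def hitIndices {α : Type*} [Preorder α] {n : ℕ} (e : Fin n → α) (l r : α) : Set ℕ :=
  {i | ∃ h : i < n, e ⟨i, h⟩ ∈ Ioo l r}

namespace hitIndices

variable {α : Type*} [LinearOrder α] {n : ℕ} {e : Fin n → α} {l r : α} {m k : ℕ}

theorem lt_apply_of_le (he : Monotone e) (hm : m ∈ hitIndices e l r) (hmk : m ≤ k)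
    (hk : k < n) : l < e ⟨k, hk⟩ := by
  obtain ⟨_, hlm, -⟩ := hm
  exact hlm.trans_le (he (Fin.mk_le_mk.2 hmk))

theorem apply_lt_of_le (he : Monotone e) (hm : m ∈ hitIndices e l r) (hkm : k ≤ m)
    (hk : k < n) : e ⟨k, hk⟩ < r := by
  obtain ⟨_, -, hmr⟩ := hm
  exact (he (Fin.mk_le_mk.2 hkm)).trans_lt hmr

theorem apply_le_of_lt_of_isLeast (hm : IsLeast (hitIndices e l r) m) (hkm : k < m)
    (hk : k < n) (hkr : e ⟨k, hk⟩ < r) : e ⟨k, hk⟩ ≤ l :=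
  not_lt.1 fun hlk ↦ (hm.2 ⟨hk, hlk, hkr⟩).not_gt hkm

theorem le_apply_of_lt_of_isGreatest (hm : IsGreatest (hitIndices e l r) m) (hmk : m < k)
    (hk : k < n) (hlk : l < e ⟨k, hk⟩) : r ≤ e ⟨k, hk⟩ :=
  not_lt.1 fun hkr ↦ (hm.2 ⟨hk, hlk, hkr⟩).not_gt hmk

theorem exists_mem_Ioo_inter_of_interleave (he : Monotone e) {l' r' : α} {p q p' q' : ℕ}
    (hp : p + 1 ∈ hitIndices e l r) (hq : IsGreatest (hitIndices e l r) q)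
    (hp' : IsLeast (hitIndices e l' r') (p' + 1)) (hq' : q' ∈ hitIndices e l' r')
    (hpp' : p < p') (hp'q : p' < q) (hqq' : q < q') :
    l < l' ∧ r < r' ∧ ∃ i, e i ∈ Ioo l r ∧ e i ∈ Ioo l' r' := by
  have hqn : q < n := hq.1.fst
  have hq'n : q' < n := hq'.fst
  have hp'n : p' < n := hp'q.trans hqn
  have hq1n : q + 1 < n := by omega
  have hp'r' : e ⟨p', hp'n⟩ < r' := apply_lt_of_le he hp'.1 p'.le_succ hp'n
  have hl : l < l' := (lt_apply_of_le he hp hpp' hp'n).trans_le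
    (apply_le_of_lt_of_isLeast hp' p'.lt_succ_self hp'n hp'r')
  have hlq : l < e ⟨q + 1, hq1n⟩ := lt_apply_of_le he hq.1 q.le_succ hq1n
  have hr : r < r' := (le_apply_of_lt_of_isGreatest hq q.lt_succ_self hq1n hlq).trans_lt
    (apply_lt_of_le he hq' hqq' hq1n)
  obtain ⟨hin, hi'⟩ := hp'.1
  exact ⟨hl, hr, ⟨p' + 1, hin⟩,
    ⟨lt_apply_of_le he hp (by omega) hin, apply_lt_of_le he hq.1 hp'q hin⟩, hi'⟩

end hitIndices

theorem stmt0_general (n : ℕ) (x y : ℝ)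
    (a : Fin n → Chord) (e : Fin n → ℝ) (he : StrictMono e)
    (heIoo : ∀ i, e i ∈ Set.Ioo x y)
    -- each chord of A has exactly one endpoint on the arc, namely e i
    (hae : ∀ i, ((a i).l = e i ∧ (a i).r ∉ Set.Ioo x y) ∨
                ((a i).r = e i ∧ (a i).l ∉ Set.Ioo x y))
    (B : Finset Chord)
    -- each chord of B has both endpoints on the arc
    (hB : ∀ b ∈ B, b.l ∈ Set.Ioo x y ∧ b.r ∈ Set.Ioo x y)
    -- each triangle of G(A ∪ B) contains at most one chord of B
    (htri : ∀ c d g : Chord,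
      c ∈ Finset.univ.image a ∪ B → d ∈ Finset.univ.image a ∪ B →
      g ∈ Finset.univ.image a ∪ B →
      c.Crosses d → c.Crosses g → d.Crosses g →
      ¬(c ∈ B ∧ d ∈ B) ∧ ¬(c ∈ B ∧ g ∈ B) ∧ ¬(d ∈ B ∧ g ∈ B))
    (P Q : Chord → ℕ)
    -- P b + 1 is the minimal index of a chord of A crossing b
    (hP : ∀ b ∈ B, IsLeast {i : ℕ | ∃ h : i < n, (a ⟨i, h⟩).Crosses b} (P b + 1))
    -- Q b is the maximal index of a chord of A crossing b
    (hQ : ∀ b ∈ B, IsGreatest {i : ℕ | ∃ h : i < n, (a ⟨i, h⟩).Crosses b} (Q b)) :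
    ¬ ∃ b ∈ B, ∃ b' ∈ B, P b < P b' ∧ P b' < Q b ∧ Q b < Q b' := by
  rintro ⟨b, hb, b', hb', hPP, hPQ, hQQ⟩
  have crosses_iff : ∀ i, ∀ c ∈ B, (a i).Crosses c ↔ e i ∈ Ioo c.l c.r := fun i c hc ↦
    Chord.crosses_iff_mem_Ioo (hae i) (heIoo i) (hB c hc)
  have hits : ∀ c ∈ B, {i : ℕ | ∃ h : i < n, (a ⟨i, h⟩).Crosses c} = hitIndices e c.l c.r :=
    fun c hc ↦ Set.ext fun _ ↦ exists_congr fun _ ↦ crosses_iff _ c hc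
  obtain ⟨hl, hr, i, hib, hib'⟩ := hitIndices.exists_mem_Ioo_inter_of_interleave he.monotone
    (hits b hb ▸ hP b hb).1 (hits b hb ▸ hQ b hb) (hits b' hb' ▸ hP b' hb')
    (hits b' hb' ▸ hQ b' hb').1 hPP hPQ hQQ
  have hbb' : b.Crosses b' := Or.inl ⟨hl, hib'.1.trans hib.2, hr⟩
  exact (htri (a i) b b' (by simp) (by simp [hb]) (by simp [hb'])
    ((crosses_iff i b hb).2 hib) ((crosses_iff i b' hb').2 hib') hbb').2.2 ⟨hb, hb'⟩

/-- with the chords of `A` enumerated `a 0, …, a (n-1)` in arc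
order of their unique endpoints `e i` on the arc `(x, y)`, the intervals
`[P b, Q b]` associated to the chords of `B` never properly cross. -/
theorem stmt0 (n : ℕ) (x y : ℝ) (hxy : x < y)
    (a : Fin n → Chord) (e : Fin n → ℝ) (he : StrictMono e)
    (heIoo : ∀ i, e i ∈ Set.Ioo x y)
    -- each chord of A has exactly one endpoint on the arc, namely e i
    (hae : ∀ i, ((a i).l = e i ∧ (a i).r ∉ Set.Ioo x y) ∨
                ((a i).r = e i ∧ (a i).l ∉ Set.Ioo x y))
    (B : Finset Chord)
    -- each chord of B has both endpoints on the arc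
    (hB : ∀ b ∈ B, b.l ∈ Set.Ioo x y ∧ b.r ∈ Set.Ioo x y)
    -- each triangle of G(A ∪ B) contains at most one chord of B
    (htri : ∀ c d g : Chord,
      c ∈ Finset.univ.image a ∪ B → d ∈ Finset.univ.image a ∪ B →
      g ∈ Finset.univ.image a ∪ B →
      c.Crosses d → c.Crosses g → d.Crosses g →
      ¬(c ∈ B ∧ d ∈ B) ∧ ¬(c ∈ B ∧ g ∈ B) ∧ ¬(d ∈ B ∧ g ∈ B))
    -- each chord of B crosses some chord of A
    (hcross : ∀ b ∈ B, ∃ i, (a i).Crosses b)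
    (P Q : Chord → ℕ)
    -- P b + 1 is the minimal index of a chord of A crossing b
    (hP : ∀ b ∈ B, IsLeast {i : ℕ | ∃ h : i < n, (a ⟨i, h⟩).Crosses b} (P b + 1))
    -- Q b is the maximal index of a chord of A crossing b
    (hQ : ∀ b ∈ B, IsGreatest {i : ℕ | ∃ h : i < n, (a ⟨i, h⟩).Crosses b} (Q b)) :
    ¬ ∃ b ∈ B, ∃ b' ∈ B, P b < P b' ∧ P b' < Q b ∧ Q b < Q b' :=
  stmt0_general n x y a e he heIoo hae B hB htri P Q hP hQ
end

section
/- Let I be a finite family of closed intervals [p,q] with integer endpoints and p < q, such that no two intervals properly cross (i.e., there are no intervals [p1,q1], [p2,q2] in I with p1 < p2 < q1 < q2). Define two distinct intervals to be touching if the right endpoint of one equals the left endpoint of the other. Then the graph on I with touching as adjacency is properly 3-colorable. -/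
/-!
Color the integer points rather than the intervals: if `g : ℤ → Fin 3` gives the two endpoints of
every interval different colors, then coloring `[p, q]` by `g q` is proper for touching, since
`q = p'` forces `g q = g p' ≠ g q'`. Such a `g` exists because non-crossing intervals, drawn as arcs
over the line, form an outerplanar graph on their endpoints. Concretely, for intervals inside
`[a, b]` we also ask `g a ≠ g b` and induct on `b - a`: after discarding `[a, b]` itself, both
endpoints of a longest remaining interval are straddled by no interval, and one of them lies
strictly between `a` and `b`. Cutting there, the colorings of the two halves are glued after
permuting the colors of the right one.
-/

namespace IntervalTouching

def NonCrossing (I : Finset (ℤ × ℤ)) : Prop :=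
  ∀ p ∈ I, ∀ q ∈ I, ¬(p.1 < q.1 ∧ q.1 < p.2 ∧ p.2 < q.2)

theorem NonCrossing.mono {I J : Finset (ℤ × ℤ)} (hI : NonCrossing I) (hJ : J ⊆ I) :
    NonCrossing J :=
  fun p hp q hq => hI p (hJ hp) q (hJ hq)

def IsCut (I : Finset (ℤ × ℤ)) (c : ℤ) : Prop :=
  ∀ p ∈ I, p.2 ≤ c ∨ c ≤ p.1

section Longest

variable {I : Finset (ℤ × ℤ)} {r : ℤ × ℤ}

theorem NonCrossing.isCut_fst_of_longest (hnc : NonCrossing I) (hr : r ∈ I)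
    (hlong : ∀ p ∈ I, p.2 - p.1 ≤ r.2 - r.1) : IsCut I r.1 := by
  intro p hp
  have := hnc p hp r hr
  have := hlong p hp
  omega

theorem NonCrossing.isCut_snd_of_longest (hnc : NonCrossing I) (hr : r ∈ I)
    (hlong : ∀ p ∈ I, p.2 - p.1 ≤ r.2 - r.1) : IsCut I r.2 := by
  intro p hp
  have := hnc r hr p hp
  have := hlong p hp
  omega

end Longest

theorem NonCrossing.exists_isCut {I : Finset (ℤ × ℤ)} (hnc : NonCrossing I)
    (hlt : ∀ p ∈ I, p.1 < p.2) (hne : I.Nonempty) {a b : ℤ} (hI : ∀ p ∈ I, a ≤ p.1 ∧ p.2 ≤ b)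
    (hab : (a, b) ∉ I) : ∃ c, a < c ∧ c < b ∧ IsCut I c := by
  obtain ⟨r, hr, hlong⟩ := I.exists_max_image (fun p => p.2 - p.1) hne
  have hr_lt := hlt r hr
  obtain ⟨har, hrb⟩ := hI r hr
  rcases har.lt_or_eq with har | rfl
  · exact ⟨r.1, har, by omega, hnc.isCut_fst_of_longest hr hlong⟩
  · have hrb : r.2 < b := hrb.lt_of_ne fun h => hab (h ▸ hr)
    exact ⟨r.2, hr_lt, hrb, hnc.isCut_snd_of_longest hr hlong⟩

theorem exists_perm_apply_eq_apply_ne {α : Type*} [DecidableEq α] {c d : α} (hcd : c ≠ d)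
    (he : ∃ e, e ≠ c ∧ e ≠ d) (x y : α) : ∃ σ : Equiv.Perm α, σ x = c ∧ σ y ≠ d := by
  by_cases hy : Equiv.swap x c y = d
  · obtain ⟨e, hec, hed⟩ := he
    refine ⟨(Equiv.swap x c).trans (Equiv.swap d e), ?_, ?_⟩
    · simp [Equiv.swap_apply_of_ne_of_ne hcd hec.symm]
    · simp [hy, hed]
  · exact ⟨Equiv.swap x c, Equiv.swap_apply_left x c, hy⟩

def glueAt {α : Type*} (c : ℤ) (f g : ℤ → α) (x : ℤ) : α :=
  if x ≤ c then f x else g x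

theorem glueAt_of_le {α : Type*} {c x : ℤ} (f g : ℤ → α) (hx : x ≤ c) : glueAt c f g x = f x :=
  if_pos hx

theorem glueAt_of_ge {α : Type*} {c x : ℤ} {f g : ℤ → α} (hfg : f c = g c) (hx : c ≤ x) :
    glueAt c f g x = g x := by
  unfold glueAt
  split_ifs with h
  · rw [le_antisymm h hx, hfg]
  · rfl

theorem NonCrossing.exists_endpoint_coloring {I : Finset (ℤ × ℤ)} (hnc : NonCrossing I)
    (hlt : ∀ p ∈ I, p.1 < p.2) {a b : ℤ} (hab : a < b) (hI : ∀ p ∈ I, a ≤ p.1 ∧ p.2 ≤ b) :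
    ∃ g : ℤ → Fin 3, (∀ p ∈ I, g p.1 ≠ g p.2) ∧ g a ≠ g b := by
  induction hn : (b - a).toNat using Nat.strong_induction_on generalizing I a b with
  | _ n ih =>
  set J := I.erase (a, b)
  suffices ∃ g : ℤ → Fin 3, (∀ p ∈ J, g p.1 ≠ g p.2) ∧ g a ≠ g b by
    obtain ⟨g, hg, hgab⟩ := this
    refine ⟨g, fun p hp => ?_, hgab⟩
    rcases eq_or_ne p (a, b) with rfl | hne
    · exact hgab
    · exact hg p (Finset.mem_erase.2 ⟨hne, hp⟩)
  have hJ : J ⊆ I := I.erase_subset _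
  have hsub : ∀ K ⊆ J, ∀ a' b', a' < b' → b' - a' < b - a → (∀ p ∈ K, a' ≤ p.1 ∧ p.2 ≤ b') →
      ∃ g : ℤ → Fin 3, (∀ p ∈ K, g p.1 ≠ g p.2) ∧ g a' ≠ g b' :=
    fun K hK a' b' hab' hlen hK' =>
      ih _ (by omega) (hnc.mono (hK.trans hJ)) (fun p hp => hlt p (hJ (hK hp))) hab' hK' rfl
  rcases J.eq_empty_or_nonempty with hJe | hJne
  · exact ⟨fun x => if x = a then 0 else 1, by simp [hJe], by simp [hab.ne']⟩
  obtain ⟨c, hac, hcb, hcut⟩ := (hnc.mono hJ).exists_isCut (fun p hp => hlt p (hJ hp)) hJne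
    (fun p hp => hI p (hJ hp)) (I.notMem_erase (a, b))
  obtain ⟨gL, hgL, hgLac⟩ := hsub (J.filter (·.2 ≤ c)) (J.filter_subset _) a c hac (by omega)
    fun p hp => ⟨(hI p (hJ (Finset.mem_filter.1 hp).1)).1, (Finset.mem_filter.1 hp).2⟩
  obtain ⟨gR, hgR, -⟩ := hsub (J.filter (c ≤ ·.1)) (J.filter_subset _) c b hcb (by omega)
    fun p hp => ⟨(Finset.mem_filter.1 hp).2, (hI p (hJ (Finset.mem_filter.1 hp).1)).2⟩
  have hthird : ∀ u v : Fin 3, ∃ e, e ≠ u ∧ e ≠ v := by decide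
  obtain ⟨σ, hσc, hσb⟩ := exists_perm_apply_eq_apply_ne hgLac.symm (hthird _ _) (gR c) (gR b)
  have hglue : gL c = (σ ∘ gR) c := hσc.symm
  refine ⟨glueAt c gL (σ ∘ gR), fun p hp => ?_, ?_⟩
  · have hp_lt := hlt p (hJ hp)
    rcases hcut p hp with h | h
    · rw [glueAt_of_le _ _ (by omega), glueAt_of_le _ _ h]
      exact hgL p (Finset.mem_filter.2 ⟨hp, h⟩)
    · rw [glueAt_of_ge hglue h, glueAt_of_ge hglue (by omega)]
      exact σ.injective.ne (hgR p (Finset.mem_filter.2 ⟨hp, h⟩))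
  · rw [glueAt_of_le _ _ hac.le, glueAt_of_ge hglue hcb.le]
    exact fun h => hσb h.symm

end IntervalTouching

/-- a finite family of pairwise non-crossing closed integer
intervals can be properly 3-colored with respect to the "touching" relation
(right endpoint of one equals left endpoint of the other). -/
theorem stmt1 (I : Finset (ℤ × ℤ))
    (hlt : ∀ p ∈ I, p.1 < p.2)
    -- no two intervals properly cross
    (hnc : ∀ p ∈ I, ∀ q ∈ I, ¬(p.1 < q.1 ∧ q.1 < p.2 ∧ p.2 < q.2)) :
    ∃ f : ℤ × ℤ → Fin 3, ∀ p ∈ I, ∀ q ∈ I, p ≠ q →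
      (p.2 = q.1 ∨ q.2 = p.1) → f p ≠ f q := by
  obtain ⟨a, ha⟩ := (I.image Prod.fst).bddBelow
  obtain ⟨b, hb⟩ := (I.image Prod.snd).bddAbove
  obtain ⟨g, hg, -⟩ := IntervalTouching.NonCrossing.exists_endpoint_coloring (I := I) hnc hlt
    (lt_max_of_lt_right (lt_add_one a)) fun p hp =>
      ⟨ha (Finset.mem_image_of_mem _ hp), le_max_of_le_left (hb (Finset.mem_image_of_mem _ hp))⟩
  refine ⟨fun p => g p.2, fun p hp q hq _ htouch => ?_⟩
  show g p.2 ≠ g q.2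
  rcases htouch with h | h
  · exact h ▸ hg q hq
  · exact h ▸ (hg p hp).symm
end

section
/- Let G be a graph whose vertices are a finite family of pairwise non-crossing closed intervals with integer endpoints (no p1 < p2 < q1 < q2 occurs), with two intervals adjacent iff the right endpoint of one equals the left endpoint of the other. Then G has maximum clique size at most 3 and chromatic number at most 3. -/
/-!
Read an interval `(a, b)` as an arc joining the points `a < b` of `ℤ`. Non-crossing arcs form an
outerplanar graph, which is 2-degenerate: if some arc has an endpoint strictly inside it, take a
shortest such arc and an endpoint `x` strictly inside it; otherwise let `x` be any endpoint. An arc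
at `x` lies inside the chosen arc and is shorter, so it has no endpoint strictly inside; hence `x`
has at most one neighbour on each side.
Deleting the arcs at `x` and recolouring `x` gives, by induction, a proper 3-colouring of the arcs.
Touching intervals `p.2 = q.1` are sent by `p ↦ p.2` to the two ends of the arc `q`, so colouring
an interval by its right end is proper. Three intervals cannot touch pairwise, since along a
touching `p.2 = q.1` the left ends strictly increase.
-/

open Finset SimpleGraph

namespace IntervalArcs

def endpoints (I : Finset (ℤ × ℤ)) : Finset ℤ := I.image Prod.fst ∪ I.image Prod.snd

def neighbors (I : Finset (ℤ × ℤ)) (x : ℤ) : Finset ℤ :=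
  (I.filter fun p => p.2 = x).image Prod.fst ∪ (I.filter fun p => p.1 = x).image Prod.snd

def IsNoncrossing (I : Finset (ℤ × ℤ)) : Prop :=
  ∀ p ∈ I, ∀ q ∈ I, ¬(p.1 < q.1 ∧ q.1 < p.2 ∧ p.2 < q.2)

def IsInnermost (I : Finset (ℤ × ℤ)) (p : ℤ × ℤ) : Prop :=
  ∀ z ∈ endpoints I, ¬(p.1 < z ∧ z < p.2)

def arcGraph (I : Finset (ℤ × ℤ)) : SimpleGraph ℤ := fromRel fun x y => (x, y) ∈ I

def touchingGraph (I : Finset (ℤ × ℤ)) : SimpleGraph I :=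
  fromRel fun p q => p.1.2 = q.1.1 ∨ q.1.2 = p.1.1

variable {I : Finset (ℤ × ℤ)}

theorem mem_endpoints {x : ℤ} : x ∈ endpoints I ↔ ∃ p ∈ I, p.1 = x ∨ p.2 = x := by
  simp only [endpoints, mem_union, mem_image]
  grind

theorem IsNoncrossing.mono {J : Finset (ℤ × ℤ)} (h : IsNoncrossing I) (hJ : J ⊆ I) :
    IsNoncrossing J :=
  fun p hp q hq => h p (hJ hp) q (hJ hq)

theorem IsNoncrossing.exists_endpoint_forall_isInnermost (hnc : IsNoncrossing I)
    (hI : I.Nonempty) :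
    ∃ x ∈ endpoints I, ∀ p ∈ I, p.1 = x ∨ p.2 = x → IsInnermost I p := by
  classical
  by_cases hS : (I.filter fun p => ¬IsInnermost I p).Nonempty
  · obtain ⟨c, hc, hmin⟩ := exists_min_image _ (fun p : ℤ × ℤ => p.2 - p.1) hS
    obtain ⟨hcI, hc⟩ := mem_filter.1 hc
    simp only [IsInnermost, not_forall, not_not] at hc
    obtain ⟨x, hx, hcx, hxc⟩ := hc
    refine ⟨x, hx, fun p hp hpx => by_contra fun hp' => ?_⟩
    have hlen := hmin p (mem_filter.2 ⟨hp, hp'⟩)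
    have := hnc c hcI p hp
    have := hnc p hp c hcI
    omega
  · obtain ⟨p, hp⟩ := hI
    exact ⟨p.1, mem_endpoints.2 ⟨p, hp, .inl rfl⟩, fun q hq _ => by_contra fun h =>
      hS ⟨q, mem_filter.2 ⟨hq, h⟩⟩⟩

theorem card_neighbors_le_two (hlt : ∀ p ∈ I, p.1 < p.2) {x : ℤ}
    (hx : ∀ p ∈ I, p.1 = x ∨ p.2 = x → IsInnermost I p) : #(neighbors I x) ≤ 2 := by
  have left : #(I.filter fun p => p.2 = x) ≤ 1 := by
    refine card_le_one.2 fun p hp q hq => ?_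
    rw [mem_filter] at hp hq
    have := hx p hp.1 (.inr hp.2) q.1 (mem_endpoints.2 ⟨q, hq.1, .inl rfl⟩)
    have := hx q hq.1 (.inr hq.2) p.1 (mem_endpoints.2 ⟨p, hp.1, .inl rfl⟩)
    have := hlt p hp.1
    have := hlt q hq.1
    exact Prod.ext (by omega) (hp.2.trans hq.2.symm)
  have right : #(I.filter fun p => p.1 = x) ≤ 1 := by
    refine card_le_one.2 fun p hp q hq => ?_
    rw [mem_filter] at hp hq
    have := hx p hp.1 (.inl hp.2) q.2 (mem_endpoints.2 ⟨q, hq.1, .inr rfl⟩)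
    have := hx q hq.1 (.inl hq.2) p.2 (mem_endpoints.2 ⟨p, hp.1, .inr rfl⟩)
    have := hlt p hp.1
    have := hlt q hq.1
    exact Prod.ext (hp.2.trans hq.2.symm) (by omega)
  calc #(neighbors I x) ≤ _ + _ := card_union_le _ _
    _ ≤ 1 + 1 := add_le_add (card_image_le.trans left) (card_image_le.trans right)

theorem IsNoncrossing.exists_coloring (hlt : ∀ p ∈ I, p.1 < p.2) (hnc : IsNoncrossing I) :
    ∃ f : ℤ → Fin 3, ∀ p ∈ I, f p.1 ≠ f p.2 := by
  induction I using Finset.strongInduction with | H I ih =>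
  rcases I.eq_empty_or_nonempty with rfl | hI
  · exact ⟨0, by simp⟩
  obtain ⟨x, hxI, hx⟩ := hnc.exists_endpoint_forall_isInnermost hI
  have hJI : (I.filter fun p => p.1 ≠ x ∧ p.2 ≠ x) ⊂ I := by
    obtain ⟨p, hp, hpx⟩ := mem_endpoints.1 hxI
    exact filter_ssubset.2 ⟨p, hp, by tauto⟩
  obtain ⟨f, hf⟩ := ih _ hJI (fun p hp => hlt p (mem_filter.1 hp).1)
    (hnc.mono (filter_subset _ _))
  obtain ⟨c, -, hc⟩ : ∃ c ∈ (univ : Finset (Fin 3)), c ∉ (neighbors I x).image f := by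
    refine exists_mem_notMem_of_card_lt_card ?_
    calc _ ≤ #(neighbors I x) := card_image_le
      _ < 3 := by have := card_neighbors_le_two hlt hx; omega
      _ = _ := by simp
  refine ⟨Function.update f x c, fun p hp => ?_⟩
  have hneighbor (y : ℤ) (hy : y ∈ neighbors I x) : f y ≠ c := fun h =>
    hc (mem_image.2 ⟨y, hy, h⟩)
  have := hlt p hp
  by_cases h1 : p.1 = x
  · rw [h1, Function.update_self, Function.update_of_ne (by omega)]
    exact (hneighbor _ (mem_union_right _ (mem_image_of_mem _ (mem_filter.2 ⟨hp, h1⟩)))).symm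
  by_cases h2 : p.2 = x
  · rw [h2, Function.update_self, Function.update_of_ne h1]
    exact hneighbor _ (mem_union_left _ (mem_image_of_mem _ (mem_filter.2 ⟨hp, h2⟩)))
  rw [Function.update_of_ne h1, Function.update_of_ne h2]
  exact hf p (mem_filter.2 ⟨hp, h1, h2⟩)

theorem arcGraph_colorable (hlt : ∀ p ∈ I, p.1 < p.2) (hnc : IsNoncrossing I) :
    (arcGraph I).Colorable 3 := by
  obtain ⟨f, hf⟩ := hnc.exists_coloring hlt
  refine ⟨Coloring.mk f ?_⟩
  rintro x y ⟨-, hxy | hyx⟩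
  exacts [hf _ hxy, (hf _ hyx).symm]

def touchingGraphHomArcGraph (hlt : ∀ p ∈ I, p.1 < p.2) : touchingGraph I →g arcGraph I where
  toFun p := p.1.2
  map_rel' {p q} h := by
    have := hlt p p.2
    have := hlt q q.2
    obtain ⟨-, (hpq | hqp) | (hqp | hpq)⟩ := h
    all_goals first
      | exact ⟨by omega, .inl (hpq ▸ q.2)⟩
      | exact ⟨by omega, .inr (hqp ▸ p.2)⟩

theorem touchingGraph_cliqueFree_three (hlt : ∀ p ∈ I, p.1 < p.2) :
    (touchingGraph I).CliqueFree 3 := by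
  intro s hs
  obtain ⟨p, q, r, hpq, hpr, hqr, -⟩ := is3Clique_iff.1 hs
  have := hlt p p.2
  have := hlt q q.2
  have := hlt r r.2
  simp only [touchingGraph, fromRel_adj] at hpq hpr hqr
  omega

end IntervalArcs

/-- the "touching" graph of a finite family of pairwise
non-crossing closed integer intervals has clique number at most 3 and
chromatic number at most 3. -/
theorem stmt2 (I : Finset (ℤ × ℤ))
    (hlt : ∀ p ∈ I, p.1 < p.2)
    -- no two intervals properly cross
    (hnc : ∀ p ∈ I, ∀ q ∈ I, ¬(p.1 < q.1 ∧ q.1 < p.2 ∧ p.2 < q.2)) :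
    (SimpleGraph.fromRel (fun p q : {p : ℤ × ℤ // p ∈ I} =>
        (p.1.2 = q.1.1 ∨ q.1.2 = p.1.1))).CliqueFree 4 ∧
    (SimpleGraph.fromRel (fun p q : {p : ℤ × ℤ // p ∈ I} =>
        (p.1.2 = q.1.1 ∨ q.1.2 = p.1.1))).Colorable 3 :=
  ⟨(IntervalArcs.touchingGraph_cliqueFree_three hlt).mono (by norm_num),
    (IntervalArcs.arcGraph_colorable hlt hnc).of_hom (IntervalArcs.touchingGraphHomArcGraph hlt)⟩
end
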